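/- Let f : ℝ → ℝ be analytic with power series f(t) = Σ_{m=0}^∞ a_m t^m having a_m ≥ 0 for all m and radius of convergence R > 0. Then k(x,y) = f(⟨x,y⟩) is a positive semidefinite kernel on the set {x ∈ ℝⁿ : ‖x‖² < R}: every Gram matrix (k(x_i,x_j)) is positive semidefinite. -/

import Mathlib

/-!
Gram matrices are positive semidefinite, hence by the Schur product theorem so are their
entrywise powers. The matrix `(f ⟪xᵢ, xⱼ⟫)` is the entrywise limit of nonnegative combinations
of these powers, and the quadratic form passes to the limit; Cauchy–Schwarz keeps every
`⟪xᵢ, xⱼ⟫` inside the interval of convergence.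
-/

open Matrix
open scoped ComplexOrder

namespace Matrix

variable {ι : Type*}

theorem PosSemidef.map_pow {𝕜 : Type*} [RCLike 𝕜] [Finite ι] {A : Matrix ι ι 𝕜}
    (hA : A.PosSemidef) (m : ℕ) : (A.map (· ^ m)).PosSemidef := by
  induction m with
  | zero =>
    convert posSemidef_vecMulVec_self_star (1 : ι → 𝕜) using 1
    ext i j
    simp [vecMulVec_apply]
  | succ m ih =>
    convert ih.hadamard hA using 1
    ext i j
    simp only [map_apply, hadamard_apply, pow_succ]

theorem PosSemidef.map_of_hasSum [Fintype ι] {A : Matrix ι ι ℝ} (hA : A.PosSemidef)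
    {f : ℝ → ℝ} {a : ℕ → ℝ} (ha : ∀ m, 0 ≤ a m)
    (hf : ∀ i j, HasSum (fun m ↦ a m * A i j ^ m) (f (A i j))) : (A.map f).PosSemidef := by
  refine .of_dotProduct_mulVec_nonneg (hA.isHermitian.map f fun _ ↦ rfl) fun x ↦ ?_
  have hsum : HasSum (fun m ↦ a m * (star x ⬝ᵥ (A.map (· ^ m) *ᵥ x)))
      (star x ⬝ᵥ (A.map f *ᵥ x)) := by
    simp only [dotProduct, mulVec, map_apply, Finset.mul_sum]
    refine hasSum_sum fun i _ ↦ hasSum_sum fun j _ ↦ ?_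
    exact (((hf i j).mul_right (x j)).mul_left (star x i)).congr_fun fun m ↦ by ring
  exact hsum.nonneg fun m ↦ mul_nonneg (ha m) ((hA.map_pow m).dotProduct_mulVec_nonneg x)

end Matrix

theorem abs_real_inner_lt_of_sq_norm_lt {E : Type*} [NormedAddCommGroup E] [InnerProductSpace ℝ E]
    {x y : E} {R : ℝ} (hx : ‖x‖ ^ 2 < R) (hy : ‖y‖ ^ 2 < R) : |inner ℝ x y| < R := by
  have := abs_real_inner_le_norm x y
  nlinarith [norm_nonneg x, norm_nonneg y, sq_nonneg (‖x‖ - ‖y‖)]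

theorem stmt9_general (n : ℕ) (f : ℝ → ℝ) (a : ℕ → ℝ) (R : ℝ)
    (ha : ∀ m, 0 ≤ a m)
    (hf : ∀ t : ℝ, |t| < R → HasSum (fun m : ℕ => a m * t ^ m) (f t))
    (M : ℕ) (xs : Fin M → EuclideanSpace ℝ (Fin n)) (hxs : ∀ i, ‖xs i‖ ^ 2 < R)
    (c : Fin M → ℝ) :
    0 ≤ ∑ i, ∑ j, c i * c j * f (inner ℝ (xs i) (xs j) : ℝ) := by
  have hK : ((gram ℝ xs).map f).PosSemidef :=
    (posSemidef_gram ℝ xs).map_of_hasSum ha fun i j ↦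
      hf _ (abs_real_inner_lt_of_sq_norm_lt (hxs i) (hxs j))
  refine (hK.dotProduct_mulVec_nonneg c).trans_eq ?_
  simp only [dotProduct, mulVec, map_apply, gram_apply, star_trivial, Finset.mul_sum]
  exact Finset.sum_congr rfl fun i _ ↦ Finset.sum_congr rfl fun j _ ↦ by ring

/-- A Taylor-type kernel `k(x,y) = f(⟨x,y⟩)` with `f` given by a power series with
nonnegative coefficients and radius of convergence `R > 0` is positive semidefinite on
`{x : ‖x‖² < R}`. -/
theorem stmt9 (n : ℕ) (f : ℝ → ℝ) (a : ℕ → ℝ) (R : ℝ) (hR : 0 < R)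
    (ha : ∀ m, 0 ≤ a m)
    (hf : ∀ t : ℝ, |t| < R → HasSum (fun m : ℕ => a m * t ^ m) (f t))
    (M : ℕ) (xs : Fin M → EuclideanSpace ℝ (Fin n)) (hxs : ∀ i, ‖xs i‖ ^ 2 < R)
    (c : Fin M → ℝ) :
    0 ≤ ∑ i, ∑ j, c i * c j * f (inner ℝ (xs i) (xs j) : ℝ) :=
  stmt9_general n f a R ha hf M xs hxs c
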